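/- arXiv:1904.03395 — 2 statements merged into one kernel-verified Lean document; each statement's English description precedes it below -/
import Mathlib

section
/- Let p > 3 be a prime number. Then for each n ∈ ℕ: H_{p−2}(n) ≡ (p+1)/2 (mod p) if n ≡ −2 (mod p), H_{p−2}(n) ≡ (p+3)/2 (mod p) if n ≡ −1 (mod p), and H_{p−2}(n) ≡ 1 (mod p) otherwise. As a result, ν_p(H_{p−2}(n)) = 0 for every n ∈ ℕ. -/
/-- `Hd d n` is the number of permutations of an `n`-element set that are products of
pairwise disjoint cycles of length `d`, given by the explicit formula
`H_d(n) = Σ_{k=0}^{⌊n/d⌋} n!/((n−dk)!·k!·d^k)` (each summand is an integer, so the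
natural-number division below is exact). -/
def Hd (d n : ℕ) : ℕ :=
  ∑ k ∈ Finset.range (n / d + 1),
    Nat.factorial n / (Nat.factorial (n - d * k) * Nat.factorial k * d ^ k)

/-!
Deciding whether the point `n + 1` is fixed or lies in one of the `d`-cycles gives the recurrence
`H_d(n+1) = H_d(n) + n(n-1)⋯(n-d+2) · H_d(n+1-d)`. For `d = p - 2` the falling factorial
`n(n-1)⋯(n-p+4)` vanishes mod `p` unless `n ≡ -3, -2, -1`, where Wilson's theorem evaluates
it to `-1/2, 1, -1/2`. So mod `p` the recurrence only involves residues, and strong induction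
shows that `H_{p-2}(n)` is `1/2`, `3/2` or `1` according as `n ≡ -2`, `n ≡ -1` or neither;
none of these is `0` mod `p`.
-/

open Finset Nat

theorem Nat.factorial_mul_pow_dvd_descFactorial {d : ℕ} (hd : 0 < d) (n k : ℕ) :
    k ! * d ^ k ∣ n.descFactorial (d * k) := by
  have hbell := uniformBell_mul_eq k hd.ne'
  calc k ! * d ^ k ∣ k ! * d ! ^ k :=
        mul_dvd_mul_left _ (pow_dvd_pow_of_dvd (dvd_factorial hd le_rfl) k)
    _ ∣ (k * d)! := ⟨k.uniformBell d, by rw [← hbell]; ring⟩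
    _ ∣ n.descFactorial (d * k) := mul_comm k d ▸ factorial_dvd_descFactorial n _

theorem Nat.succ_descFactorial_succ_eq_add (n k : ℕ) :
    (n + 1).descFactorial (k + 1) = n.descFactorial (k + 1) + (k + 1) * n.descFactorial k := by
  rw [succ_descFactorial_succ, descFactorial_succ, ← add_mul]
  rcases le_or_gt k n with hkn | hnk
  · congr 1; omega
  · simp [descFactorial_eq_zero_iff_lt.mpr hnk]

/-- The number of permutations of `n` points made of exactly `k` disjoint `d`-cycles. -/
def HdTerm (d n k : ℕ) : ℕ := n.descFactorial (d * k) / (k ! * d ^ k)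

theorem HdTerm_mul {d : ℕ} (hd : 0 < d) (n k : ℕ) :
    HdTerm d n k * (k ! * d ^ k) = n.descFactorial (d * k) :=
  Nat.div_mul_cancel (factorial_mul_pow_dvd_descFactorial hd n k)

theorem HdTerm_zero_right (d n : ℕ) : HdTerm d n 0 = 1 := by
  simp [HdTerm]

theorem HdTerm_eq_zero {d n k : ℕ} (h : n < d * k) : HdTerm d n k = 0 := by
  simp [HdTerm, descFactorial_eq_zero_iff_lt.mpr h]

theorem Hd_eq_sum_HdTerm {d n N : ℕ} (hd : 0 < d) (hN : n / d < N) :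
    Hd d n = ∑ k ∈ range N, HdTerm d n k := by
  have hterm : ∀ k ∈ range (n / d + 1), n ! / ((n - d * k)! * k ! * d ^ k) = HdTerm d n k := by
    intro k hk
    have hk : d * k ≤ n := by
      have := (Nat.le_div_iff_mul_le hd).1 (Nat.lt_succ_iff.1 (mem_range.1 hk))
      linarith
    rw [HdTerm, mul_assoc, ← Nat.div_div_eq_div_mul, ← descFactorial_eq_div hk]
  rw [Hd, sum_congr rfl hterm, ← sum_range_add_sum_Ico _ (show n / d + 1 ≤ N by omega),
    left_eq_add]
  refine sum_eq_zero fun k hk => HdTerm_eq_zero ?_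
  have := (Nat.div_lt_iff_lt_mul hd).1 (mem_Ico.1 hk).1
  linarith

theorem HdTerm_succ {d : ℕ} (hd : 0 < d) (n k : ℕ) :
    HdTerm d (n + 1) (k + 1) =
      HdTerm d n (k + 1) + n.descFactorial (d - 1) * HdTerm d (n + 1 - d) k := by
  refine Nat.eq_of_mul_eq_mul_right (m := (k + 1)! * d ^ (k + 1))
    (Nat.mul_pos (factorial_pos _) (Nat.pow_pos hd)) ?_
  have hsplit : n.descFactorial (d - 1) * (n + 1 - d).descFactorial (d * k)
      = n.descFactorial (d * (k + 1) - 1) := by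
    have := descFactorial_mul_descFactorial (n := n) (show d - 1 ≤ d * (k + 1) - 1 by
      rw [Nat.mul_succ]; omega)
    rwa [show d * (k + 1) - 1 - (d - 1) = d * k by rw [Nat.mul_succ]; omega,
      show n - (d - 1) = n + 1 - d by omega, mul_comm] at this
  have hD : d * (k + 1) = d * (k + 1) - 1 + 1 := by rw [Nat.mul_succ]; omega
  rw [add_mul, HdTerm_mul hd, HdTerm_mul hd, hD, succ_descFactorial_succ_eq_add, ← hD,
    factorial_succ, pow_succ, add_right_inj, ← hsplit, ← HdTerm_mul hd]
  ring

theorem Hd_succ {d : ℕ} (hd : 0 < d) (n : ℕ) :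
    Hd d (n + 1) = Hd d n + n.descFactorial (d - 1) * Hd d (n + 1 - d) := by
  have hlt : ∀ m ≤ n + 1, m / d < n + 2 := fun m hm =>
    lt_of_le_of_lt (Nat.div_le_self m d) (by omega)
  rw [Hd_eq_sum_HdTerm hd (hlt _ le_rfl), Hd_eq_sum_HdTerm hd (hlt n (by omega)),
    Hd_eq_sum_HdTerm (N := n + 1) hd (lt_of_le_of_lt (Nat.div_le_self _ d) (by omega)),
    sum_range_succ', sum_range_succ' (HdTerm d n), HdTerm_zero_right, HdTerm_zero_right, mul_sum]
  simp only [HdTerm_succ hd, sum_add_distrib]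
  ring

theorem Hd_of_lt {d n : ℕ} (h : n < d) : Hd d n = 1 := by
  rw [Hd_eq_sum_HdTerm (N := 1) (by omega) (by simp [Nat.div_eq_of_lt h]), sum_range_one,
    HdTerm_zero_right]

theorem ZMod.natCast_ne_zero_of_lt {p a : ℕ} (h0 : 0 < a) (h : a < p) : (a : ZMod p) ≠ 0 :=
  fun h' => absurd (Nat.le_of_dvd h0 ((ZMod.natCast_eq_zero_iff a p).1 h')) (by omega)

theorem ZMod.two_ne_zero_of_two_lt {p : ℕ} (hp : 2 < p) : (2 : ZMod p) ≠ 0 := by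
  exact_mod_cast ZMod.natCast_ne_zero_of_lt (p := p) (a := 2) two_pos hp

theorem ZMod.natCast_self_sub {p a : ℕ} (h : a ≤ p) : ((p - a : ℕ) : ZMod p) = -a := by
  rw [Nat.cast_sub h, ZMod.natCast_self, zero_sub]

section Residue

variable {p : ℕ} [Fact p.Prime]

theorem ZMod.natCast_add_div_two (hp : 2 < p) {a : ℕ} (ha : Odd a) :
    (((p + a) / 2 : ℕ) : ZMod p) = a / 2 := by
  have hp_odd := (Fact.out : p.Prime).odd_of_ne_two hp.ne'
  rw [Nat.cast_div (hp_odd.add_odd ha).two_dvd (by exact_mod_cast two_ne_zero_of_two_lt hp),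
    Nat.cast_add, ZMod.natCast_self, zero_add, Nat.cast_ofNat]

theorem two_mul_factorial_sub_three (hp : 3 < p) : 2 * ((p - 3)! : ZMod p) = -1 := by
  obtain ⟨q, rfl⟩ : ∃ q, p = q + 3 := ⟨p - 3, by omega⟩
  have hq : (q : ZMod (q + 3)) = -3 := by
    simpa using ZMod.natCast_self_sub (p := q + 3) (a := 3) (by omega)
  have hwilson := ZMod.wilsons_lemma (p := q + 3)
  rw [show q + 3 - 1 = q + 2 by omega, factorial_succ, factorial_succ] at hwilson
  push_cast at hwilson
  rw [hq] at hwilson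
  rw [Nat.add_sub_cancel]
  linear_combination hwilson

theorem descPochhammer_eval_neg_three (hp : 3 < p) :
    (descPochhammer (ZMod p) (p - 3)).eval (-3) = -1 / 2 := by
  conv_lhs => rw [show (-3 : ZMod p) = ((p - 3 : ℕ) : ZMod p) by
    rw [ZMod.natCast_self_sub (by omega)]; norm_num]
  rw [descPochhammer_eval_eq_descFactorial, descFactorial_self,
    eq_div_iff (ZMod.two_ne_zero_of_two_lt (by omega)), ← two_mul_factorial_sub_three hp,
    mul_comm]

theorem descPochhammer_eval_neg_two (hp : 3 < p) :
    (descPochhammer (ZMod p) (p - 3)).eval (-2) = 1 := by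
  have hdesc := factorial_mul_descFactorial (show p - 3 ≤ p - 2 by omega)
  rw [show p - 2 - (p - 3) = 1 by omega, factorial_one, one_mul,
    ← mul_factorial_pred (show p - 2 ≠ 0 by omega), show p - 2 - 1 = p - 3 by omega] at hdesc
  rw [show (-2 : ZMod p) = ((p - 2 : ℕ) : ZMod p) by
      rw [ZMod.natCast_self_sub (by omega)]; norm_num,
    descPochhammer_eval_eq_descFactorial, hdesc]
  push_cast
  rw [ZMod.natCast_self_sub (by omega)]
  linear_combination -two_mul_factorial_sub_three hp

theorem descPochhammer_eval_neg_one (hp : 3 < p) :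
    (descPochhammer (ZMod p) (p - 3)).eval (-1) = -1 / 2 := by
  have hdesc := factorial_mul_descFactorial (show p - 3 ≤ p - 1 by omega)
  rw [show p - 1 - (p - 3) = 2 by omega, factorial_two] at hdesc
  have hwilson := congrArg (Nat.cast (R := ZMod p)) hdesc
  push_cast at hwilson
  conv_lhs => rw [show (-1 : ZMod p) = ((p - 1 : ℕ) : ZMod p) by
    rw [ZMod.natCast_self_sub (by omega)]; norm_num]
  rw [descPochhammer_eval_eq_descFactorial, eq_div_iff (ZMod.two_ne_zero_of_two_lt (by omega))]
  linear_combination hwilson + ZMod.wilsons_lemma (p := p)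

variable (p) in
def hdResidue (x : ZMod p) : ZMod p :=
  if x = -2 then 1 / 2 else if x = -1 then 3 / 2 else 1

theorem hdResidue_neg_two : hdResidue p (-2) = 1 / 2 := if_pos rfl

theorem hdResidue_neg_one : hdResidue p (-1) = 3 / 2 := by
  rw [hdResidue, if_neg fun h => one_ne_zero (by linear_combination h), if_pos rfl]

theorem hdResidue_natCast_of_lt (a : ℕ) (h : a + 2 < p) : hdResidue p a = 1 := by
  have hne : ∀ b : ℕ, b ≤ 2 → 0 < b → (a : ZMod p) ≠ -b := fun b hb hb0 hab =>
    ZMod.natCast_ne_zero_of_lt (p := p) (a := a + b) (by omega) (by omega)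
      (by push_cast; rw [hab]; ring)
  rw [hdResidue, if_neg (by exact_mod_cast hne 2 le_rfl two_pos),
    if_neg (by exact_mod_cast hne 1 one_le_two one_pos)]

theorem hdResidue_ne_zero (hp : 3 < p) (x : ZMod p) : hdResidue p x ≠ 0 := by
  have h2 := ZMod.two_ne_zero_of_two_lt (p := p) (by omega)
  have h3 : (3 : ZMod p) ≠ 0 := by
    exact_mod_cast ZMod.natCast_ne_zero_of_lt (p := p) (a := 3) (by omega) hp
  unfold hdResidue
  split_ifs
  exacts [div_ne_zero one_ne_zero h2, div_ne_zero h3 h2, one_ne_zero]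

theorem hdResidue_add_one (hp : 3 < p) (y : ZMod p) :
    hdResidue p (y + 1) =
      hdResidue p y + (descPochhammer (ZMod p) (p - 3)).eval y * hdResidue p (y + 3) := by
  have h2 := ZMod.two_ne_zero_of_two_lt (p := p) (by omega)
  have hp4 : p ≠ 4 := by rintro rfl; exact absurd Fact.out (by norm_num : ¬ (4).Prime)
  have hzero : hdResidue p 0 = 1 := by simpa using hdResidue_natCast_of_lt 0 (by omega)
  have hone : hdResidue p 1 = 1 := by simpa using hdResidue_natCast_of_lt 1 (by omega)
  have htwo : hdResidue p 2 = 1 := by simpa using hdResidue_natCast_of_lt 2 (by omega)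
  obtain ⟨r, hr, rfl⟩ : ∃ r < p, (r : ZMod p) = y :=
    ⟨y.val, ZMod.val_lt y, ZMod.natCast_zmod_val y⟩
  rcases (show r < p - 3 ∨ r = p - 3 ∨ r = p - 2 ∨ r = p - 1 by omega) with
    hr | rfl | rfl | rfl
  · have hsucc := hdResidue_natCast_of_lt (p := p) (r + 1) (by omega)
    push_cast at hsucc
    rw [descPochhammer_eval_eq_descFactorial, descFactorial_eq_zero_iff_lt.2 hr, hsucc,
      hdResidue_natCast_of_lt r (by omega)]
    simp
  · rw [hdResidue_natCast_of_lt _ (by omega), ZMod.natCast_self_sub (by omega), Nat.cast_ofNat,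
      show (-3 : ZMod p) + 1 = -2 by ring, show (-3 : ZMod p) + 3 = 0 by ring,
      hdResidue_neg_two, descPochhammer_eval_neg_three hp, hzero]
    field_simp
    ring
  · rw [ZMod.natCast_self_sub (by omega), Nat.cast_ofNat,
      show (-2 : ZMod p) + 1 = -1 by ring, show (-2 : ZMod p) + 3 = 1 by ring,
      hdResidue_neg_two, hdResidue_neg_one, descPochhammer_eval_neg_two hp, hone]
    field_simp
    ring
  · rw [ZMod.natCast_self_sub (by omega), Nat.cast_one,
      show (-1 : ZMod p) + 1 = 0 by ring, show (-1 : ZMod p) + 3 = 2 by ring,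
      hdResidue_neg_one, descPochhammer_eval_neg_one hp, hzero, htwo]
    field_simp
    ring

theorem natCast_Hd_sub_two (hp : 3 < p) (n : ℕ) : (Hd (p - 2) n : ZMod p) = hdResidue p n := by
  induction n using Nat.strong_induction_on with
  | _ n ih =>
  rcases lt_or_ge n (p - 2) with hn | hn
  · rw [Hd_of_lt hn, Nat.cast_one, hdResidue_natCast_of_lt n (by omega)]
  obtain ⟨m, rfl⟩ : ∃ m, n = m + 1 := ⟨n - 1, by omega⟩
  have hshift : ((m + 1 - (p - 2) : ℕ) : ZMod p) = m + 3 := by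
    rw [Nat.cast_sub hn, ZMod.natCast_self_sub (by omega)]
    push_cast
    ring
  rw [Hd_succ (by omega), show p - 2 - 1 = p - 3 by omega]
  push_cast
  rw [ih m (by omega), ih _ (by omega), hshift, ← descPochhammer_eval_eq_descFactorial,
    hdResidue_add_one hp]

end Residue

theorem stmt3 (p : ℕ) (hp : p.Prime) (hp3 : 3 < p) (n : ℕ) :
    (((n : ZMod p) = -2 → Hd (p - 2) n ≡ (p + 1) / 2 [MOD p]) ∧
     ((n : ZMod p) = -1 → Hd (p - 2) n ≡ (p + 3) / 2 [MOD p]) ∧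
     ((n : ZMod p) ≠ -1 → (n : ZMod p) ≠ -2 → Hd (p - 2) n ≡ 1 [MOD p])) ∧
    padicValNat p (Hd (p - 2) n) = 0 := by
  have : Fact p.Prime := ⟨hp⟩
  have hHd := natCast_Hd_sub_two hp3 n
  refine ⟨⟨fun h => ?_, fun h => ?_, fun hne1 hne2 => ?_⟩, ?_⟩
  · rw [← ZMod.natCast_eq_natCast_iff, hHd, h, hdResidue_neg_two,
      ZMod.natCast_add_div_two (by omega) odd_one, Nat.cast_one]
  · rw [← ZMod.natCast_eq_natCast_iff, hHd, h, hdResidue_neg_one,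
      ZMod.natCast_add_div_two (by omega) (by decide), Nat.cast_ofNat]
  · rw [← ZMod.natCast_eq_natCast_iff, hHd, Nat.cast_one, hdResidue, if_neg hne2, if_neg hne1]
  · refine padicValNat.eq_zero_of_not_dvd fun hdvd => hdResidue_ne_zero hp3 n ?_
    rw [← hHd, ZMod.natCast_eq_zero_iff]
    exact hdvd
end

section
/- Fix k ∈ ℕ_+. Then for every positive integer d with d ≥ max{k+2, 3+2·√(k+2)} such that d+k is a composite number, one has H_d(n) ≡ 1 (mod d+k) for all n ∈ ℕ. -/
open Finset Nat

/-- The number `(d * j)! / (j! * d ^ j)` of permutations of `d * j` points that are products of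
`j` disjoint `d`-cycles: the cycle through the last point is one of
`(d * j + (d - 1)).descFactorial (d - 1)`. -/
def cycleCount (d : ℕ) : ℕ → ℕ
  | 0 => 1
  | j + 1 => (d * j + (d - 1)).descFactorial (d - 1) * cycleCount d j

theorem cycleCount_mul_factorial_mul_pow {d : ℕ} (hd : 0 < d) (j : ℕ) :
    cycleCount d j * (j ! * d ^ j) = (d * j)! := by
  induction j with
  | zero => simp [cycleCount]
  | succ j ih =>
    have hdesc := factorial_mul_descFactorial (show d - 1 ≤ d * j + (d - 1) by omega)
    rw [show d * j + (d - 1) - (d - 1) = d * j by omega] at hdesc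
    have hlast : d * (j + 1) = d * j + (d - 1) + 1 := by rw [mul_add]; omega
    calc cycleCount d (j + 1) * ((j + 1)! * d ^ (j + 1))
        = (d * j + (d - 1)).descFactorial (d - 1) * (cycleCount d j * (j ! * d ^ j))
            * (d * (j + 1)) := by rw [cycleCount, factorial_succ, pow_succ]; ring
      _ = (d * (j + 1))! := by rw [ih, hlast, factorial_succ, ← hdesc]; ring

theorem factorial_div_eq_choose_mul_cycleCount {d n j : ℕ} (hd : 0 < d) (h : d * j ≤ n) :
    n ! / ((n - d * j)! * j ! * d ^ j) = n.choose (d * j) * cycleCount d j := by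
  apply Nat.div_eq_of_eq_mul_left (by positivity)
  rw [← choose_mul_factorial_mul_factorial h, ← cycleCount_mul_factorial_mul_pow hd]
  ring

theorem Hd_eq_sum_range {d n N : ℕ} (hd : 0 < d) (hN : n / d < N) :
    Hd d n = ∑ j ∈ range N, n.choose (d * j) * cycleCount d j := by
  calc Hd d n = ∑ j ∈ range (n / d + 1), n.choose (d * j) * cycleCount d j := by
        refine sum_congr rfl fun j hj => factorial_div_eq_choose_mul_cycleCount hd ?_
        rw [mul_comm, ← Nat.le_div_iff_mul_le hd]
        exact Nat.lt_succ_iff.mp (mem_range.mp hj)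
    _ = _ := by
        refine sum_subset (range_subset_range.mpr hN) fun j _ hj => ?_
        have hlt : n < d * j := by
          rw [mul_comm, ← Nat.div_lt_iff_lt_mul hd]
          simpa using hj
        rw [choose_eq_zero_of_lt hlt, zero_mul]

theorem Hd_zero (d : ℕ) : Hd d 0 = 1 := by
  simp [Hd]

theorem choose_add_mul_descFactorial (n a b : ℕ) :
    n.choose (a + b) * (a + b).descFactorial b = n.descFactorial b * (n - b).choose a := by
  rw [descFactorial_eq_factorial_mul_choose, descFactorial_eq_factorial_mul_choose, mul_left_comm,
    choose_mul (le_add_left b a), Nat.add_sub_cancel]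
  ring

theorem choose_mul_cycleCount_succ {d : ℕ} (hd : 0 < d) (n j : ℕ) :
    (n + 1).choose (d * (j + 1)) * cycleCount d (j + 1)
      = n.choose (d * (j + 1)) * cycleCount d (j + 1)
        + n.descFactorial (d - 1) * ((n + 1 - d).choose (d * j) * cycleCount d j) := by
  rw [show d * (j + 1) = d * j + (d - 1) + 1 by rw [mul_add]; omega, choose_succ_succ', add_mul,
    cycleCount, ← mul_assoc, choose_add_mul_descFactorial, show n - (d - 1) = n + 1 - d by omega]
  ring

theorem Hd_modEq_one {d m : ℕ} (hd : 0 < d) (hm : m ∣ (d - 1)!) (n : ℕ) : Hd d n ≡ 1 [MOD m] := by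
  induction n with
  | zero => rw [Hd_zero]
  | succ n ih =>
    have hcoeff : n.descFactorial (d - 1) ≡ 0 [MOD m] :=
      modEq_zero_iff_dvd.mpr (hm.trans (factorial_dvd_descFactorial n (d - 1)))
    rw [Hd_succ hd]
    simpa using ih.add (hcoeff.mul_right (Hd d (n + 1 - d)))

theorem mul_dvd_factorial {a b : ℕ} (ha : 0 < a) (hab : a < b) : a * b ∣ b ! := by
  obtain ⟨c, rfl⟩ : ∃ c, b = c + 1 := ⟨b - 1, by omega⟩
  rw [factorial_succ, mul_comm a]
  exact mul_dvd_mul_left _ (dvd_factorial ha (by omega))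

theorem dvd_factorial_of_not_prime {m N : ℕ} (hm : 1 < m) (hcomp : ¬ m.Prime)
    (hmN : m ≤ 2 * N) (hsq : 4 * m ≤ N ^ 2) : m ∣ N ! := by
  set p := m.minFac
  have hp : 2 ≤ p := (minFac_prime hm.ne').two_le
  have hpp : p * p ≤ m := by simpa [sq] using minFac_sq_le_self (by omega) hcomp
  have hpq : p * (m / p) = m := Nat.mul_div_cancel' (minFac_dvd m)
  have hple : p ≤ m / p := (Nat.le_div_iff_mul_le (by omega)).mpr hpp
  rcases hple.lt_or_eq with hlt | heq
  · have hq : m / p ≤ N := by nlinarith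
    calc m = p * (m / p) := hpq.symm
      _ ∣ (m / p)! := mul_dvd_factorial (by omega) hlt
      _ ∣ N ! := factorial_dvd_factorial hq
  · have h2p : 2 * p ≤ N := by
      have : (2 * p) ^ 2 ≤ N ^ 2 := by nlinarith
      exact (Nat.pow_le_pow_iff_left two_ne_zero).mp this
    calc m = p * p := by rw [← heq] at hpq; exact hpq.symm
      _ ∣ p * (2 * p) := mul_dvd_mul_left p (dvd_mul_left p 2)
      _ ∣ (2 * p)! := mul_dvd_factorial (by omega) (by omega)
      _ ∣ N ! := factorial_dvd_factorial h2p

theorem four_mul_add_le_sq {k d : ℕ} (hd : (3 : ℝ) + 2 * Real.sqrt (k + 2) ≤ d) :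
    4 * (d + k) ≤ (d - 1) ^ 2 := by
  have hs := Real.sq_sqrt (show (0 : ℝ) ≤ k + 2 by positivity)
  have hd1 : 1 ≤ d := by
    have : (1 : ℝ) ≤ d := by linarith [Real.sqrt_nonneg ((k : ℝ) + 2)]
    exact_mod_cast this
  rw [← Nat.cast_le (α := ℝ)]
  push_cast [Nat.cast_sub hd1]
  nlinarith [Real.sqrt_nonneg ((k : ℝ) + 2)]

theorem stmt5_general (k : ℕ) (d : ℕ)
    (hd1 : k + 2 ≤ d) (hd2 : (3 : ℝ) + 2 * Real.sqrt (k + 2) ≤ d)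
    (hcomp : ¬ (d + k).Prime) :
    ∀ n : ℕ, Hd d n ≡ 1 [MOD d + k] :=
  Hd_modEq_one (by omega)
    (dvd_factorial_of_not_prime (by omega) hcomp (by omega) (four_mul_add_le_sq hd2))

theorem stmt5 (k : ℕ) (hk : 0 < k) (d : ℕ) (hd0 : 0 < d)
    (hd1 : k + 2 ≤ d) (hd2 : (3 : ℝ) + 2 * Real.sqrt (k + 2) ≤ d)
    (hcomp : ¬ (d + k).Prime) :
    ∀ n : ℕ, Hd d n ≡ 1 [MOD d + k] :=
  stmt5_general k d hd1 hd2 hcomp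
end
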